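/- Let B be an n×n symmetric matrix over a field F, and suppose that for some k with 1 ≤ k ≤ n − 1, every principal minor of B of order k is zero and every principal minor of B of order k + 1 is zero. Then for every j with k ≤ j ≤ n, every principal minor of B of order j is zero. -/

import Mathlib

open Matrix

/-- The minor of a square matrix `B` lying in the rows indexed by `α` and the columns
indexed by `β` (each listed in increasing order); junk value `0` if `α.card ≠ β.card`. -/
def qMinor {R : Type*} [CommRing R] {m : Type*} [Fintype m] [LinearOrder m]
    (B : Matrix m m R) (α β : Finset m) : R :=
  if h : β.card = α.card then
    (Matrix.of fun i j : Fin α.card =>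
      B (α.orderEmbOfFin rfl i) (β.orderEmbOfFin h j)).det
  else 0

/-- `α` and `β` index a quasi-principal submatrix of order `k`, i.e.
`|α| = |β| = k` and `k - 1 ≤ |α ∩ β| (≤ k)`. -/
def IsQPPair {m : Type*} [DecidableEq m] (k : ℕ) (α β : Finset m) : Prop :=
  α.card = k ∧ β.card = k ∧ k - 1 ≤ (α ∩ β).card

/-- All quasi-principal minors of `B` of order `k` are nonzero. -/
def QPAllNonzero {R : Type*} [CommRing R] {m : Type*} [Fintype m] [LinearOrder m]
    (B : Matrix m m R) (k : ℕ) : Prop :=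
  ∀ α β : Finset m, IsQPPair k α β → qMinor B α β ≠ 0

/-- All quasi-principal minors of `B` of order `k` are zero. -/
def QPAllZero {R : Type*} [CommRing R] {m : Type*} [Fintype m] [LinearOrder m]
    (B : Matrix m m R) (k : ℕ) : Prop :=
  ∀ α β : Finset m, IsQPPair k α β → qMinor B α β = 0

/-- The three possible letters of a qpr-sequence. -/
inductive QPR : Type
  | A
  | S
  | N
deriving DecidableEq

open Classical in
/-- The letter of the qpr-sequence of `B` corresponding to order `k`:
`A` if all quasi-principal minors of order `k` are nonzero, `N` if all are zero,
and `S` otherwise. -/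
noncomputable def qprEntry {R : Type*} [CommRing R] {m : Type*} [Fintype m] [LinearOrder m]
    (B : Matrix m m R) (k : ℕ) : QPR :=
  if QPAllNonzero B k then QPR.A
  else if QPAllZero B k then QPR.N
  else QPR.S

/-- A sequence of letters `q 0, …, q (n-1)` (standing for `q_1 ⋯ q_n`) is attainable
over `F` if it is the qpr-sequence of an `n × n` symmetric matrix over `F`. -/
def Attainable (F : Type*) [Field F] {n : ℕ} (q : Fin n → QPR) : Prop :=
  ∃ B : Matrix (Fin n) (Fin n) F, B.IsSymm ∧ ∀ k : Fin n, qprEntry B ((k : ℕ) + 1) = q k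

/-- The Schur complement `B/B[γ] = B[γᶜ] - B[γᶜ, γ] B[γ]⁻¹ B[γ, γᶜ]`,
with rows and columns indexed by `γᶜ` (indexing inherited from `B`). -/
noncomputable def schurCompl {R : Type*} [CommRing R] {n : ℕ}
    (B : Matrix (Fin n) (Fin n) R) (γ : Finset (Fin n)) :
    Matrix ↥(γᶜ) ↥(γᶜ) R :=
  B.submatrix (fun i : ↥(γᶜ) => (i : Fin n)) (fun j : ↥(γᶜ) => (j : Fin n)) -
    B.submatrix (fun i : ↥(γᶜ) => (i : Fin n)) (fun j : ↥γ => (j : Fin n)) *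
      (B.submatrix (fun i : ↥γ => (i : Fin n)) fun j : ↥γ => (j : Fin n))⁻¹ *
      B.submatrix (fun i : ↥γ => (i : Fin n)) fun j : ↥(γᶜ) => (j : Fin n)

/-- The `(m+1) × (m+1)` matrix with block form `[[A, x], [yᵀ, b]]`. -/
def borderMat {R : Type*} [CommRing R] {m : ℕ} (A : Matrix (Fin m) (Fin m) R)
    (x y : Fin m → R) (b : R) : Matrix (Fin (m + 1)) (Fin (m + 1)) R :=
  Matrix.of fun i j =>
    if hi : (i : ℕ) < m then
      if hj : (j : ℕ) < m then A ⟨i, hi⟩ ⟨j, hj⟩ else x ⟨i, hi⟩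
    else
      if hj : (j : ℕ) < m then y ⟨j, hj⟩ else b

/-! Induction on the order. If a principal submatrix `M = B[γ]` of order `j ≥ k + 2` were
invertible, Jacobi's identity `det M * det M⁻¹[S] = det M[Sᶜ]` would make every principal minor of
order 1 or 2 of the symmetric matrix `M⁻¹` vanish, since the complementary minors of `M` have
orders `j - 1, j - 2 ≥ k`. So `M⁻¹` has zero diagonal and `-(M⁻¹ a b)² = 0` off it, i.e. `M⁻¹ = 0`. -/

open Finset

namespace Matrix

variable {ι R : Type*} [DecidableEq ι]

theorem det_submatrix_pair [CommRing R] (A : Matrix ι ι R) {a b : ι} (hab : a ≠ b) :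
    (A.submatrix ((↑) : ↥({a, b} : Finset ι) → ι) (↑)).det =
      A a a * A b b - A a b * A b a := by
  have hbij : Function.Bijective
      (![⟨a, by simp⟩, ⟨b, by simp⟩] : Fin 2 → ↥({a, b} : Finset ι)) := by
    rw [Fintype.bijective_iff_injective_and_card, Fintype.card_coe, card_pair hab]
    refine ⟨fun x y hxy => ?_, rfl⟩
    fin_cases x <;> fin_cases y <;> simp_all [Subtype.ext_iff, hab.symm]
  rw [← det_submatrix_equiv_self (Equiv.ofBijective _ hbij), det_fin_two]
  rfl

variable [Fintype ι]

theorem det_of_ite_mem_one [CommRing R] (N : Matrix ι ι R) (S : Finset ι) :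
    (of fun i j => if j ∈ S then N i j else (1 : Matrix ι ι R) i j).det =
      (N.submatrix ((↑) : S → ι) (↑)).det := by
  rw [twoBlockTriangular_det' _ (· ∈ S)]
  · have hone : toSquareBlockProp (of fun i j => if j ∈ S then N i j else (1 : Matrix ι ι R) i j)
        (fun i => i ∉ S) = 1 := by
      ext i j
      simp [toSquareBlockProp, toBlock_apply, j.2, one_apply, Subtype.ext_iff]
    rw [hone, det_one, mul_one]
    -- `↥S` and `{i // i ∈ S}` carry different (but equal) `Fintype` and `DecidableEq` instances
    convert rfl using 2
    ext i j
    simp [toSquareBlockProp, j.2]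
  · intro i hi j hj
    simp [hj, one_apply_ne (ne_of_mem_of_not_mem hi hj)]

theorem det_mul_det_submatrix_nonsing_inv [CommRing R] (M : Matrix ι ι R) (hM : IsUnit M.det)
    (S : Finset ι) :
    M.det * (M⁻¹.submatrix ((↑) : S → ι) (↑)).det = (M.submatrix ((↑) : ↥Sᶜ → ι) (↑)).det := by
  set C : Matrix ι ι R := of fun i j => if j ∈ S then M⁻¹ i j else (1 : Matrix ι ι R) i j
  have hMC : M * C = of fun i j => if j ∈ Sᶜ then M i j else (1 : Matrix ι ι R) i j := by
    ext i j
    have hcol : ∀ k, C k j = (if j ∈ S then M⁻¹ else 1) k j := fun k => by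
      by_cases hj : j ∈ S <;> simp [C, hj]
    rw [mul_apply]
    simp_rw [hcol, ← mul_apply, of_apply, mem_compl]
    split_ifs <;> simp_all [mul_nonsing_inv]
  rw [← det_of_ite_mem_one M Sᶜ, ← hMC, det_mul, det_of_ite_mem_one]

theorem IsSymm.det_eq_zero_of_det_submatrix_compl_eq_zero [Field R] [Nonempty ι]
    {M : Matrix ι ι R} (hM : M.IsSymm)
    (h : ∀ T : Finset ι, #T = 1 ∨ #T = 2 → (M.submatrix ((↑) : ↥Tᶜ → ι) (↑)).det = 0) :
    M.det = 0 := by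
  by_contra hdet
  have hu : IsUnit M.det := isUnit_iff_ne_zero.2 hdet
  have hinv : ∀ T : Finset ι, #T = 1 ∨ #T = 2 → (M⁻¹.submatrix ((↑) : T → ι) (↑)).det = 0 :=
    fun T hT => (mul_eq_zero.1 <|
      (det_mul_det_submatrix_nonsing_inv M hu T).trans (h T hT)).resolve_left hdet
  have hdiag : ∀ i, M⁻¹ i i = 0 := fun i => by
    simpa [det_unique] using hinv {i} (.inl (card_singleton i))
  have hoff : ∀ a b, a ≠ b → M⁻¹ a b = 0 := fun a b hab => by
    have := hinv {a, b} (.inr (card_pair hab))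
    rw [det_submatrix_pair _ hab, hdiag, hdiag, hM.inv.apply a b] at this
    simpa using this
  have : M⁻¹ = 0 := by
    ext a b
    by_cases hab : a = b
    · simp [hab, hdiag]
    · simp [hoff a b hab]
  simpa [this] using mul_nonsing_inv M hu

section QMinor

variable {m κ : Type*} [Fintype m] [LinearOrder m]

theorem qMinor_self [CommRing R] (B : Matrix m m R) (γ : Finset m) :
    qMinor B γ γ = (B.submatrix ((↑) : γ → m) (↑)).det := by
  rw [qMinor, dif_pos rfl, ← det_submatrix_equiv_self (γ.orderIsoOfFin rfl).toEquiv]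
  rfl

theorem det_submatrix_embedding_eq_qMinor [CommRing R] [Fintype κ] [DecidableEq κ]
    (B : Matrix m m R) (f : κ ↪ m) :
    (B.submatrix f f).det = qMinor B (univ.map f) (univ.map f) := by
  have hbij : Function.Bijective fun x => (⟨f x, mem_map_of_mem f (mem_univ x)⟩ : univ.map f) :=
    ⟨fun x y h => f.injective (congrArg Subtype.val h), fun ⟨y, hy⟩ => by
      obtain ⟨x, -, rfl⟩ := mem_map.1 hy
      exact ⟨x, rfl⟩⟩
  rw [qMinor_self, ← det_submatrix_equiv_self (Equiv.ofBijective _ hbij)]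
  rfl

theorem IsSymm.qMinor_self_eq_zero_of_le [Field R] {B : Matrix m m R} (hB : B.IsSymm) {k : ℕ}
    (hk : ∀ γ : Finset m, #γ = k → qMinor B γ γ = 0)
    (hk' : ∀ γ : Finset m, #γ = k + 1 → qMinor B γ γ = 0) {γ : Finset m} (hγ : k ≤ #γ) :
    qMinor B γ γ = 0 := by
  induction hj : #γ using Nat.strong_induction_on generalizing γ with
  | _ j ih =>
  obtain rfl | rfl | hj2 : j = k ∨ j = k + 1 ∨ k + 2 ≤ j := by omega
  · exact hk γ hj
  · exact hk' γ hj
  have : Nonempty γ := card_pos.1 (by omega) |>.to_subtype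
  rw [qMinor_self]
  refine (hB.submatrix _).det_eq_zero_of_det_submatrix_compl_eq_zero fun T hT => ?_
  let f : ↥Tᶜ ↪ m := (Function.Embedding.subtype _).trans (Function.Embedding.subtype _)
  have hf : #(univ.map f) = j - #T := by
    rw [card_map, card_univ, Fintype.card_coe, card_compl, Fintype.card_coe, hj]
  rw [submatrix_submatrix, ← ih (j - #T) (by omega) (by omega) hf]
  exact det_submatrix_embedding_eq_qMinor B f

end QMinor

end Matrix

theorem stmt_17_general {F : Type*} [Field F] {n : ℕ} (B : Matrix (Fin n) (Fin n) F)
    (hB : B.IsSymm) (k : ℕ)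
    (hzero : ∀ γ : Finset (Fin n), γ.card = k → qMinor B γ γ = 0)
    (hzero' : ∀ γ : Finset (Fin n), γ.card = k + 1 → qMinor B γ γ = 0) :
    ∀ j : ℕ, k ≤ j → j ≤ n →
      ∀ γ : Finset (Fin n), γ.card = j → qMinor B γ γ = 0 :=
  fun _ hkj _ _ hγ => Matrix.IsSymm.qMinor_self_eq_zero_of_le hB hzero hzero' (hγ ▸ hkj)

/-- the `NN` Theorem: if every principal minor of a symmetric matrix `B`
of order `k` is zero and every principal minor of order `k + 1` is zero
(`1 ≤ k ≤ n - 1`), then every principal minor of `B` of each order `j` with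
`k ≤ j ≤ n` is zero. -/
theorem stmt_17 {F : Type*} [Field F] {n : ℕ} (B : Matrix (Fin n) (Fin n) F)
    (hB : B.IsSymm) (k : ℕ) (hk1 : 1 ≤ k) (hk2 : k ≤ n - 1)
    (hzero : ∀ γ : Finset (Fin n), γ.card = k → qMinor B γ γ = 0)
    (hzero' : ∀ γ : Finset (Fin n), γ.card = k + 1 → qMinor B γ γ = 0) :
    ∀ j : ℕ, k ≤ j → j ≤ n →
      ∀ γ : Finset (Fin n), γ.card = j → qMinor B γ γ = 0 :=
  stmt_17_general B hB k hzero hzero'
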